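/- arXiv:2602.09780 — 5 statements merged into one kernel-verified Lean document; each statement's English description precedes it below -/
import Mathlib

section
/- Let G be a pomonoid with centre Z(G), C a symmetric monoidal category, and T a strong G-graded monad on C that is centralisable with centre Z (graded by Z(G)). Let S be a strong Z(G)-graded submonad of T with strong submonad monomorphism ι : S → T. Then the following are equivalent: (1) for every z ∈ Z(G) and every object X of C, the pair (S^z X, ι^z_X) is a graded central cone of T at (z,X); (2) S is a commutative graded submonad of the centre Z of T, with a submonad morphism ι^S : S → Z such that ι : S → T factorises through ι^S. -/
/-!
If every component of `ιS` is a graded central cone, terminality of the cones `ιZ` factors `ιS`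
through `ιZ`; the factorisation is a morphism of strong graded monads because the laws can be
checked after composing with the monomorphisms `ιZ`. Commutativity of `S` is checked after
composing with the monomorphisms `ιS`, which turns both double strengths of `S` into those of `M`
precomposed with a central cone of `M`. Conversely, central cones are stable under precomposition,
so a factorisation through `ιZ` makes every `ιS` a central cone.
-/

open CategoryTheory MonoidalCategory

universe v u

variable (G : Type*) [Monoid G] [PartialOrder G] [MulLeftMono G] [MulRightMono G]
variable (C : Type u) [Category.{v} C]

/-- A pomonoid-graded monad on a category `C`, graded by the pomonoid `G`
(a monoid with a partial order for which multiplication is monotone in both arguments). -/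
structure GradedMonad where
  /-- the graded family of endofunctors -/
  T : G → C ⥤ C
  /-- the unit -/
  η : 𝟭 C ⟶ T 1
  /-- the graded multiplication; `(μ a b).app X : T^a (T^b X) ⟶ T^{a*b} X` -/
  μ : ∀ a b : G, T b ⋙ T a ⟶ T (a * b)
  /-- the order natural transformations `T^{a ≤ a'}` -/
  ord : ∀ {a a' : G}, a ≤ a' → (T a ⟶ T a')
  ord_refl : ∀ a : G, ord (le_refl a) = 𝟙 (T a)
  ord_trans : ∀ {a a' a'' : G} (h : a ≤ a') (h' : a' ≤ a''), ord h ≫ ord h' = ord (h.trans h')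
  left_unit : ∀ (a : G) (X : C),
    η.app ((T a).obj X) ≫ (μ 1 a).app X = eqToHom (by rw [one_mul]; rfl)
  right_unit : ∀ (a : G) (X : C),
    (T a).map (η.app X) ≫ (μ a 1).app X = eqToHom (by rw [mul_one]; rfl)
  assoc : ∀ (a b c : G) (X : C),
    (T a).map ((μ b c).app X) ≫ (μ a (b * c)).app X =
      (μ a b).app ((T c).obj X) ≫ (μ (a * b) c).app X ≫ eqToHom (by rw [mul_assoc])
  μ_ord : ∀ {a a' b b' : G} (h : a ≤ a') (h' : b ≤ b') (X : C),
    (μ a b).app X ≫ (ord (mul_le_mul' h h')).app X =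
      (T a).map ((ord h').app X) ≫ (ord h).app ((T b').obj X) ≫ (μ a' b').app X

variable [MonoidalCategory C]

/-- A strong pomonoid-graded monad: a graded monad with a graded strength. -/
structure StrongGradedMonad extends GradedMonad G C where
  /-- the graded strength -/
  τ : ∀ (a : G) (X Y : C), X ⊗ (T a).obj Y ⟶ (T a).obj (X ⊗ Y)
  τ_natural : ∀ (a : G) {X X' Y Y' : C} (f : X ⟶ X') (g : Y ⟶ Y'),
    (f ⊗ₘ (T a).map g) ≫ τ a X' Y' = τ a X Y ≫ (T a).map (f ⊗ₘ g)
  τ_unitor : ∀ (a : G) (X : C),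
    τ a (𝟙_ C) X ≫ (T a).map (λ_ X).hom = (λ_ ((T a).obj X)).hom
  τ_assoc : ∀ (a : G) (X Y Z : C),
    (α_ X Y ((T a).obj Z)).hom ≫ (𝟙 X ⊗ₘ τ a Y Z) ≫ τ a X (Y ⊗ Z) =
      τ a (X ⊗ Y) Z ≫ (T a).map (α_ X Y Z).hom
  τ_η : ∀ (X Y : C), (𝟙 X ⊗ₘ η.app Y) ≫ τ 1 X Y = η.app (X ⊗ Y)
  τ_μ : ∀ (a b : G) (X Y : C),
    (𝟙 X ⊗ₘ (μ a b).app Y) ≫ τ (a * b) X Y =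
      τ a X ((T b).obj Y) ≫ (T a).map (τ b X Y) ≫ (μ a b).app (X ⊗ Y)
  τ_ord : ∀ {a a' : G} (h : a ≤ a') (X Y : C),
    (𝟙 X ⊗ₘ (ord h).app Y) ≫ τ a' X Y = τ a X Y ≫ (ord h).app (X ⊗ Y)

variable {G C}

namespace StrongGradedMonad

variable [BraidedCategory C]

/-- The graded costrength `τ'^a_{X,Y} := T^a(γ) ∘ τ^a ∘ γ`. -/
def costr (M : StrongGradedMonad G C) (a : G) (X Y : C) :
    (M.T a).obj X ⊗ Y ⟶ (M.T a).obj (X ⊗ Y) :=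
  (β_ ((M.T a).obj X) Y).hom ≫ M.τ a Y X ≫ (M.T a).map (β_ Y X).hom

/-- A strong graded monad is commutative when the two double-strength maps agree
(for all gradations `a`, `b` for which `a * b = b * a`, so that the equation typechecks;
in particular if the grading pomonoid is commutative this is required for all pairs). -/
def IsCommutative (M : StrongGradedMonad G C) : Prop :=
  ∀ (a b : G) (h : a * b = b * a) (X Y : C),
    M.costr a X ((M.T b).obj Y) ≫ (M.T a).map (M.τ b X Y) ≫ (M.μ a b).app (X ⊗ Y) =
      M.τ b ((M.T a).obj X) Y ≫ (M.T b).map (M.costr a X Y) ≫ (M.μ b a).app (X ⊗ Y) ≫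
        eqToHom (by rw [h])

/-- A graded central cone of `M` at `(z, X)` (where `z` is central in `G`),
with apex `Z` and map `ι : Z ⟶ T^z X`. -/
def CentralCone (M : StrongGradedMonad G C) (z : G) (hz : ∀ b : G, z * b = b * z)
    (X Z : C) (ι : Z ⟶ (M.T z).obj X) : Prop :=
  ∀ (b : G) (Y : C),
    (ι ⊗ₘ 𝟙 ((M.T b).obj Y)) ≫ M.costr z X ((M.T b).obj Y) ≫
        (M.T z).map (M.τ b X Y) ≫ (M.μ z b).app (X ⊗ Y) =
      (ι ⊗ₘ 𝟙 ((M.T b).obj Y)) ≫ M.τ b ((M.T z).obj X) Y ≫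
        (M.T b).map (M.costr z X Y) ≫ (M.μ b z).app (X ⊗ Y) ≫ eqToHom (by rw [hz b])

/-- A terminal graded central cone at `(z, X)`: a graded central cone through which every
graded central cone at `(z, X)` factors uniquely. -/
def IsTerminalCentralCone (M : StrongGradedMonad G C) (z : G) (hz : ∀ b : G, z * b = b * z)
    (X Z : C) (ι : Z ⟶ (M.T z).obj X) : Prop :=
  M.CentralCone z hz X Z ι ∧
    ∀ (W : C) (f : W ⟶ (M.T z).obj X), M.CentralCone z hz X W f →
      ∃! φ : W ⟶ Z, φ ≫ ι = f

/-- A strong graded monad is centralisable when it has a terminal graded central cone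
at `(z, X)` for every central `z` and every object `X`. -/
def Centralisable (M : StrongGradedMonad G C) : Prop :=
  ∀ (z : G) (hz : ∀ b : G, z * b = b * z) (X : C),
    ∃ (Z : C) (ι : Z ⟶ (M.T z).obj X), M.IsTerminalCentralCone z hz X Z ι

end StrongGradedMonad

/-- A morphism of strong graded monads, over a pomonoid morphism `φ` between the gradations
(i.e. `1 ≤ φ 1` and `φ a * φ b ≤ φ (a * b)`). -/
structure StrongGradedMonadHom
    {G : Type*} [Monoid G] [PartialOrder G] [MulLeftMono G] [MulRightMono G]
    {H : Type*} [Monoid H] [PartialOrder H] [MulLeftMono H] [MulRightMono H]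
    {C : Type u} [Category.{v} C] [MonoidalCategory C]
    (M : StrongGradedMonad G C) (P : StrongGradedMonad H C)
    (φ : G → H) (φ_one : 1 ≤ φ 1) (φ_mul : ∀ a b : G, φ a * φ b ≤ φ (a * b)) where
  app : ∀ a : G, M.T a ⟶ P.T (φ a)
  unit : ∀ X : C, M.η.app X ≫ (app 1).app X = P.η.app X ≫ (P.ord φ_one).app X
  mul : ∀ (a b : G) (X : C),
    (M.μ a b).app X ≫ (app (a * b)).app X =
      (app a).app ((M.T b).obj X) ≫ (P.T (φ a)).map ((app b).app X) ≫
        (P.μ (φ a) (φ b)).app X ≫ (P.ord (φ_mul a b)).app X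
  strength : ∀ (a : G) (X Y : C),
    (𝟙 X ⊗ₘ (app a).app Y) ≫ P.τ (φ a) X Y = M.τ a X Y ≫ (app a).app (X ⊗ Y)

/-- Every element of the centre of a monoid commutes with every element. -/
def centerComm {G : Type*} [Monoid G] (z : Submonoid.center G) :
    ∀ b : G, (z : G) * b = b * (z : G) :=
  fun b => (Submonoid.mem_center_iff.mp z.prop b).symm

section CenterInstances
variable {G : Type*} [Monoid G] [PartialOrder G] [MulLeftMono G] [MulRightMono G]

instance : MulLeftMono (Submonoid.center G) :=
  ⟨fun a b c h => show ((a * b : Submonoid.center G) : G) ≤ ((a * c : Submonoid.center G) : G) from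
    mul_le_mul_right (Subtype.coe_le_coe.mpr h) (a : G)⟩

instance : MulRightMono (Submonoid.center G) :=
  ⟨fun a b c h => show ((b * a : Submonoid.center G) : G) ≤ ((c * a : Submonoid.center G) : G) from
    mul_le_mul_left (Subtype.coe_le_coe.mpr h) (a : G)⟩

end CenterInstances

theorem GradedMonad.ord_app_eq_eqToHom {G : Type*} [Monoid G] [PartialOrder G] [MulLeftMono G]
    [MulRightMono G] {C : Type*} [Category C] (N : GradedMonad G C) {a b : G} (h : a ≤ b)
    (e : a = b) (X : C) :
    (N.ord h).app X = eqToHom (by rw [e]) := by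
  subst e
  simp [N.ord_refl]

namespace StrongGradedMonad

variable [BraidedCategory C] (M : StrongGradedMonad G C)

theorem costr_naturality (a : G) {X X' Y Y' : C} (f : X ⟶ X') (g : Y ⟶ Y') :
    ((M.T a).map f ⊗ₘ g) ≫ M.costr a X' Y' = M.costr a X Y ≫ (M.T a).map (f ⊗ₘ g) := by
  unfold costr
  slice_lhs 1 2 => rw [BraidedCategory.braiding_naturality]
  slice_lhs 2 3 => rw [M.τ_natural a g f]
  simp only [Category.assoc, ← Functor.map_comp, BraidedCategory.braiding_naturality]

def leftDoubleStrength (a b : G) (X Y : C) :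
    (M.T a).obj X ⊗ (M.T b).obj Y ⟶ (M.T (a * b)).obj (X ⊗ Y) :=
  M.costr a X ((M.T b).obj Y) ≫ (M.T a).map (M.τ b X Y) ≫ (M.μ a b).app (X ⊗ Y)

def rightDoubleStrength (a b : G) (X Y : C) :
    (M.T a).obj X ⊗ (M.T b).obj Y ⟶ (M.T (b * a)).obj (X ⊗ Y) :=
  M.τ b ((M.T a).obj X) Y ≫ (M.T b).map (M.costr a X Y) ≫ (M.μ b a).app (X ⊗ Y)

theorem isCommutative_iff :
    M.IsCommutative ↔ ∀ (a b : G) (h : a * b = b * a) (X Y : C),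
      M.leftDoubleStrength a b X Y = M.rightDoubleStrength a b X Y ≫ eqToHom (by rw [h]) := by
  simp only [IsCommutative, leftDoubleStrength, rightDoubleStrength, Category.assoc]

theorem centralCone_iff {z : G} (hz : ∀ b : G, z * b = b * z) {X Z : C}
    (ι : Z ⟶ (M.T z).obj X) :
    M.CentralCone z hz X Z ι ↔ ∀ (b : G) (Y : C),
      (ι ⊗ₘ 𝟙 _) ≫ M.leftDoubleStrength z b X Y =
        (ι ⊗ₘ 𝟙 _) ≫ M.rightDoubleStrength z b X Y ≫ eqToHom (by rw [hz b]) := by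
  simp only [CentralCone, leftDoubleStrength, rightDoubleStrength, Category.assoc]

variable {M} in
theorem CentralCone.precomp {z : G} {hz : ∀ b : G, z * b = b * z} {X Z : C}
    {ι : Z ⟶ (M.T z).obj X} (hι : M.CentralCone z hz X Z ι) {W : C} (g : W ⟶ Z) :
    M.CentralCone z hz X W (g ≫ ι) := by
  rw [centralCone_iff] at hι ⊢
  intro b Y
  simp only [comp_tensor_id, Category.assoc, hι b Y]

end StrongGradedMonad

namespace StrongGradedMonadHom

open StrongGradedMonad

variable {H : Type*} [Monoid H] [PartialOrder H] [MulLeftMono H] [MulRightMono H]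
  {N : StrongGradedMonad H C} {P : StrongGradedMonad G C}
  {φ : H → G} {φ_one : 1 ≤ φ 1} {φ_mul : ∀ a b : H, φ a * φ b ≤ φ (a * b)}
  (ι : StrongGradedMonadHom N P φ φ_one φ_mul)

theorem eqToHom_comp_app {a b : H} (e : a = b) (X : C) :
    eqToHom (show (N.T a).obj X = (N.T b).obj X by rw [e]) ≫ (ι.app b).app X =
      (ι.app a).app X ≫
        eqToHom (show (P.T (φ a)).obj X = (P.T (φ b)).obj X by rw [e]) := by
  subst e
  simp

section Braided

variable [BraidedCategory C]

theorem costr_comp_app (a : H) (X Y : C) :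
    N.costr a X Y ≫ (ι.app a).app (X ⊗ Y) =
      ((ι.app a).app X ⊗ₘ 𝟙 Y) ≫ P.costr (φ a) X Y := by
  unfold costr
  slice_lhs 3 4 => rw [(ι.app a).naturality]
  slice_lhs 2 3 => rw [← ι.strength a Y X]
  slice_lhs 1 2 => rw [← BraidedCategory.braiding_naturality ((ι.app a).app X) (𝟙 Y)]
  simp only [Category.assoc]

theorem leftDoubleStrength_comp_app (a b : H) (X Y : C) :
    N.leftDoubleStrength a b X Y ≫ (ι.app (a * b)).app (X ⊗ Y) =
      ((ι.app a).app X ⊗ₘ (ι.app b).app Y) ≫ P.leftDoubleStrength (φ a) (φ b) X Y ≫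
        (P.ord (φ_mul a b)).app (X ⊗ Y) := by
  simp only [leftDoubleStrength, Category.assoc]
  rw [ι.mul a b (X ⊗ Y)]
  slice_lhs 2 3 => rw [(ι.app a).naturality]
  slice_lhs 1 2 => rw [ι.costr_comp_app a X ((N.T b).obj Y)]
  slice_lhs 3 4 => rw [← Functor.map_comp, ← ι.strength b X Y, Functor.map_comp]
  slice_lhs 2 3 => rw [← P.costr_naturality (φ a) (𝟙 X) ((ι.app b).app Y)]
  simp only [CategoryTheory.Functor.map_id, Category.assoc]
  slice_lhs 1 2 => rw [tensor_id_comp_id_tensor]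
  simp only [Category.assoc]

theorem rightDoubleStrength_comp_app (a b : H) (X Y : C) :
    N.rightDoubleStrength a b X Y ≫ (ι.app (b * a)).app (X ⊗ Y) =
      ((ι.app a).app X ⊗ₘ (ι.app b).app Y) ≫ P.rightDoubleStrength (φ a) (φ b) X Y ≫
        (P.ord (φ_mul b a)).app (X ⊗ Y) := by
  simp only [rightDoubleStrength, Category.assoc]
  rw [ι.mul b a (X ⊗ Y)]
  slice_lhs 2 3 => rw [(ι.app b).naturality]
  slice_lhs 1 2 => rw [← ι.strength b ((N.T a).obj X) Y]
  slice_lhs 3 4 => rw [← Functor.map_comp, ι.costr_comp_app a X Y, Functor.map_comp]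
  slice_lhs 2 3 => rw [← P.τ_natural (φ b) ((ι.app a).app X) (𝟙 Y)]
  simp only [CategoryTheory.Functor.map_id, Category.assoc]
  slice_lhs 1 2 => rw [id_tensor_comp_tensor_id]
  simp only [Category.assoc]

end Braided

def lift {Q : StrongGradedMonad H C} (κ : StrongGradedMonadHom Q P φ φ_one φ_mul)
    (hκ : ∀ (a : H) (X : C), Mono ((κ.app a).app X))
    (f : ∀ (a : H) (X : C), (N.T a).obj X ⟶ (Q.T a).obj X)
    (hf : ∀ (a : H) (X : C), f a X ≫ (κ.app a).app X = (ι.app a).app X) :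
    StrongGradedMonadHom N Q id (le_of_eq rfl) (fun _ _ => le_of_eq rfl) where
  app a :=
    { app := f a
      naturality := fun X Y g => by
        change _ = f a X ≫ (Q.T a).map g
        rw [← cancel_mono ((κ.app a).app Y), Category.assoc, Category.assoc, hf,
          (ι.app a).naturality, (κ.app a).naturality, reassoc_of% hf] }
  unit X := by
    rw [Q.ord_app_eq_eqToHom _ rfl, eqToHom_refl, Category.comp_id,
      ← cancel_mono ((κ.app 1).app X), Category.assoc]
    exact (congrArg _ (hf 1 X)).trans ((ι.unit X).trans (κ.unit X).symm)
  mul a b X := by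
    rw [Q.ord_app_eq_eqToHom _ rfl, eqToHom_refl, Category.comp_id,
      ← cancel_mono ((κ.app (a * b)).app X)]
    simp only [id_eq, Category.assoc, hf, ι.mul, κ.mul]
    rw [(κ.app a).naturality_assoc, reassoc_of% hf, ← Functor.map_comp_assoc, hf]
  strength a X Y := by
    rw [← cancel_mono ((κ.app a).app (X ⊗ Y))]
    simp only [id_eq, Category.assoc, hf, ← ι.strength, ← κ.strength,
      ← MonoidalCategory.id_tensor_comp_assoc]

end StrongGradedMonadHom

theorem StrongGradedMonad.isCommutative_of_forall_centralCone [BraidedCategory C]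
    {M : StrongGradedMonad G C} {S : StrongGradedMonad (Submonoid.center G) C}
    (ι : StrongGradedMonadHom S M Subtype.val (le_of_eq rfl) (fun _ _ => le_of_eq rfl))
    (hmono : ∀ (z : Submonoid.center G) (X : C), Mono ((ι.app z).app X))
    (hcone : ∀ (z : Submonoid.center G) (X : C),
      M.CentralCone (z : G) (centerComm z) X ((S.T z).obj X) ((ι.app z).app X)) :
    S.IsCommutative := by
  rw [isCommutative_iff]
  intro a b hab X Y
  rw [← cancel_mono ((ι.app (a * b)).app (X ⊗ Y)), Category.assoc,
    ι.eqToHom_comp_app hab.symm, ι.leftDoubleStrength_comp_app,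
    reassoc_of% ι.rightDoubleStrength_comp_app,
    ← id_tensor_comp_tensor_id, Category.assoc, Category.assoc,
    reassoc_of% (M.centralCone_iff _ _).mp (hcone a X) b Y,
    M.ord_app_eq_eqToHom _ (Submonoid.coe_mul _ a b).symm,
    M.ord_app_eq_eqToHom _ (Submonoid.coe_mul _ b a).symm]
  simp only [eqToHom_trans]

open StrongGradedMonad in
theorem centrality_general
    {G : Type*} [Monoid G] [PartialOrder G] [MulLeftMono G] [MulRightMono G]
    {C : Type u} [Category.{v} C] [MonoidalCategory C] [SymmetricCategory C]
    (M : StrongGradedMonad G C)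
    -- the centre of `M`
    (Zm : StrongGradedMonad (Submonoid.center G) C)
    (ιZ : StrongGradedMonadHom Zm M (Subtype.val : Submonoid.center G → G)
      (le_of_eq rfl) (fun _ _ => le_of_eq rfl))
    (hZmono : ∀ (z : Submonoid.center G) (X : C), Mono ((ιZ.app z).app X))
    (hZterm : ∀ (z : Submonoid.center G) (X : C),
      M.IsTerminalCentralCone (z : G) (centerComm z) X ((Zm.T z).obj X) ((ιZ.app z).app X))
    -- a strong `Z(G)`-graded submonad `S` of `M`
    (S : StrongGradedMonad (Submonoid.center G) C)
    (ιS : StrongGradedMonadHom S M (Subtype.val : Submonoid.center G → G)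
      (le_of_eq rfl) (fun _ _ => le_of_eq rfl))
    (hSmono : ∀ (z : Submonoid.center G) (X : C), Mono ((ιS.app z).app X)) :
    (∀ (z : Submonoid.center G) (X : C),
      M.CentralCone (z : G) (centerComm z) X ((S.T z).obj X) ((ιS.app z).app X)) ↔
    (S.IsCommutative ∧
      ∃ h : StrongGradedMonadHom S Zm (id : Submonoid.center G → Submonoid.center G)
        (le_of_eq rfl) (fun _ _ => le_of_eq rfl),
        (∀ (z : Submonoid.center G) (X : C), Mono ((h.app z).app X)) ∧
        (∀ (z : Submonoid.center G) (X : C),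
          (ιS.app z).app X = (h.app z).app X ≫ (ιZ.app z).app X)) := by
  constructor
  · intro hcone
    choose f hf using fun z X => ((hZterm z X).2 _ _ (hcone z X)).exists
    exact ⟨isCommutative_of_forall_centralCone ιS hSmono hcone, ιS.lift ιZ hZmono f hf,
      fun z X => mono_of_mono_fac (hf z X), fun z X => (hf z X).symm⟩
  · rintro ⟨-, h, -, hfac⟩ z X
    rw [hfac]
    exact (hZterm z X).1.precomp _

open StrongGradedMonad in
/-- Centrality theorem: for a centralisable strong graded monad `M` with centre `Zm`
(given by terminal graded central cones, with inclusion `ιZ : Zm ⟶ M`), a strong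
`Z(G)`-graded submonad `S` of `M` (with inclusion `ιS : S ⟶ M`) has all of its inclusion
components graded central cones if and only if `S` is a commutative graded submonad of the
centre `Zm`, via a submonad morphism `h : S ⟶ Zm` through which `ιS` factorises. -/
theorem centrality
    {G : Type*} [Monoid G] [PartialOrder G] [MulLeftMono G] [MulRightMono G]
    {C : Type u} [Category.{v} C] [MonoidalCategory C] [SymmetricCategory C]
    (M : StrongGradedMonad G C)
    -- the centre of `M`
    (Zm : StrongGradedMonad (Submonoid.center G) C)
    (ιZ : StrongGradedMonadHom Zm M (Subtype.val : Submonoid.center G → G)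
      (le_of_eq rfl) (fun _ _ => le_of_eq rfl))
    (hZmono : ∀ (z : Submonoid.center G) (X : C), Mono ((ιZ.app z).app X))
    (hZcomm : Zm.IsCommutative)
    (hZterm : ∀ (z : Submonoid.center G) (X : C),
      M.IsTerminalCentralCone (z : G) (centerComm z) X ((Zm.T z).obj X) ((ιZ.app z).app X))
    -- a strong `Z(G)`-graded submonad `S` of `M`
    (S : StrongGradedMonad (Submonoid.center G) C)
    (ιS : StrongGradedMonadHom S M (Subtype.val : Submonoid.center G → G)
      (le_of_eq rfl) (fun _ _ => le_of_eq rfl))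
    (hSmono : ∀ (z : Submonoid.center G) (X : C), Mono ((ιS.app z).app X)) :
    (∀ (z : Submonoid.center G) (X : C),
      M.CentralCone (z : G) (centerComm z) X ((S.T z).obj X) ((ιS.app z).app X)) ↔
    (S.IsCommutative ∧
      ∃ h : StrongGradedMonadHom S Zm (id : Submonoid.center G → Submonoid.center G)
        (le_of_eq rfl) (fun _ _ => le_of_eq rfl),
        (∀ (z : Submonoid.center G) (X : C), Mono ((h.app z).app X)) ∧
        (∀ (z : Submonoid.center G) (X : C),
          (ιS.app z).app X = (h.app z).app X ≫ (ιZ.app z).app X)) :=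
  centrality_general M Zm ιZ hZmono hZterm S ιS hSmono
end

section
/- Let G be a pomonoid and T a strong G-graded monad on the category Set (with its cartesian symmetric monoidal structure). For z ∈ Z(G) and a set X, define Z^z X := { t ∈ T^z X | for all b ∈ G, all sets Y, and all s ∈ T^b Y, the two double-strength composites applied to (t,s) agree, i.e. μ^{z,b}(T^z(τ^b)(τ'^z(t,s))) = μ^{b,z}(T^b(τ'^z)(τ^b(t,s))) in T^{z∗b}(X × Y) }, with ι^z_X : Z^z X ⊆ T^z X the subset inclusion. Then (Z^z X, ι^z_X) is a terminal graded central cone of T at (z, X); in particular, every strong G-graded monad on Set is centralisable. -/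
open CategoryTheory MonoidalCategory

universe v u

variable (G : Type*) [Monoid G] [PartialOrder G] [MulLeftMono G] [MulRightMono G]
variable (C : Type u) [Category.{v} C]

variable [MonoidalCategory C]

variable {G C}

namespace StrongGradedMonad

/-- The subtype `{t // M.IsCentralElement z hz X t}` is the paper's `Z^z X`. -/
def IsCentralElement (M : StrongGradedMonad G (Type u)) (z : G) (hz : ∀ b : G, z * b = b * z)
    (X : Type u) (t : (M.T z).obj X) : Prop :=
  ∀ (b : G) (Y : Type u) (s : (M.T b).obj Y),
    (M.μ z b).app (X ⊗ Y) ((M.T z).map (M.τ b X Y) (M.costr z X ((M.T b).obj Y) (t, s))) =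
      eqToHom (show (M.T (b * z)).obj (X ⊗ Y) = (M.T (z * b)).obj (X ⊗ Y) by rw [hz b])
        ((M.μ b z).app (X ⊗ Y) ((M.T b).map (M.costr z X Y) (M.τ b ((M.T z).obj X) Y (t, s))))

variable (M : StrongGradedMonad G (Type u)) (z : G) (hz : ∀ b : G, z * b = b * z) (X : Type u)

/-- Maps out of `W ⊗ T^b Y = W × T^b Y` are equal pointwise, so the cone condition only
constrains the image of `f`. -/
theorem centralCone_iff_forall_isCentralElement {W : Type u} (f : W ⟶ (M.T z).obj X) :
    M.CentralCone z hz X W f ↔ ∀ w, M.IsCentralElement z hz X (f w) := by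
  constructor
  · intro hf w b Y s
    exact ConcreteCategory.congr_hom (hf b Y) ((w, s) : W ⊗ (M.T b).obj Y)
  · intro hf b Y
    ext ⟨w, s⟩
    exact hf w b Y s

theorem isTerminalCentralCone_subtypeVal :
    M.IsTerminalCentralCone z hz X {t // M.IsCentralElement z hz X t}
      (TypeCat.ofHom Subtype.val) := by
  refine ⟨(M.centralCone_iff_forall_isCentralElement z hz X _).2 fun t => t.2, ?_⟩
  intro W f hf
  have hcentral := (M.centralCone_iff_forall_isCentralElement z hz X f).1 hf
  refine ⟨TypeCat.ofHom fun w => ⟨f w, hcentral w⟩, rfl, fun φ hφ => ?_⟩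
  ext w
  exact ConcreteCategory.congr_hom hφ w

theorem centralisable : M.Centralisable :=
  fun z hz X => ⟨_, _, M.isTerminalCentralCone_subtypeVal z hz X⟩

end StrongGradedMonad

open StrongGradedMonad in
/-- Every strong graded monad on `Set` (the category of types) is centralisable: for every
central gradation `z` and set `X`, the set of elements of `T^z X` that commute (via the two
double-strength composites) with every element of every `T^b Y`, together with the subset
inclusion, is a terminal graded central cone at `(z, X)`. -/
theorem set_terminalCentralCone
    {G : Type*} [Monoid G] [PartialOrder G] [MulLeftMono G] [MulRightMono G]
    (M : StrongGradedMonad G (Type u)) (z : G) (hz : ∀ b : G, z * b = b * z) (X : Type u) :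
    M.IsTerminalCentralCone z hz X
      {t : (M.T z).obj X //
        ∀ (b : G) (Y : Type u) (s : (M.T b).obj Y),
          (M.μ z b).app (X ⊗ Y)
              ((M.T z).map (M.τ b X Y) (M.costr z X ((M.T b).obj Y) (t, s))) =
            eqToHom (show (M.T (b * z)).obj (X ⊗ Y) = (M.T (z * b)).obj (X ⊗ Y) by rw [hz b])
              ((M.μ b z).app (X ⊗ Y)
                ((M.T b).map (M.costr z X Y) (M.τ b ((M.T z).obj X) Y (t, s))))}
      (TypeCat.ofHom Subtype.val) ∧
    M.Centralisable :=
  ⟨M.isTerminalCentralCone_subtypeVal z hz X, M.centralisable⟩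
end

section
/- Let G be a pomonoid, C a symmetric monoidal category, and T a commutative strong G-graded monad on C. Then for every z ∈ Z(G) and every object X, the pair (T^z X, id_{T^z X}) is a terminal graded central cone of T at (z, X). Consequently T is centralisable and its centre is naturally isomorphic to the restriction of T to the gradations in Z(G); in particular, every commutative graded monad is naturally isomorphic to its centre. -/
open CategoryTheory MonoidalCategory

universe v u

variable (G : Type*) [Monoid G] [PartialOrder G] [MulLeftMono G] [MulRightMono G]
variable (C : Type u) [Category.{v} C]

variable [MonoidalCategory C]

variable {G C}

/-!
For `ι = 𝟙`, the cone condition at `(z, b)` is literally the commutativity equation for the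
pair `(z, b)`, so `(T^z X, 𝟙)` is a central cone; it is terminal because every map into `T^z X`
factors uniquely through the identity. Any terminal cone `(Z, ι)` is then isomorphic to
`(T^z X, 𝟙)`, which makes `ι` invertible.
-/

namespace StrongGradedMonad

variable [BraidedCategory C]

theorem centralCone_id_of_isCommutative (M : StrongGradedMonad G C) (hcomm : M.IsCommutative)
    (z : G) (hz : ∀ b : G, z * b = b * z) (X : C) :
    M.CentralCone z hz X ((M.T z).obj X) (𝟙 _) := by
  intro b Y
  simpa only [id_tensorHom_id, Category.id_comp] using hcomm z b (hz b) X Y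

variable {M : StrongGradedMonad G C} {z : G} {hz : ∀ b : G, z * b = b * z} {X : C}

theorem isTerminalCentralCone_id (hid : M.CentralCone z hz X ((M.T z).obj X) (𝟙 _)) :
    M.IsTerminalCentralCone z hz X ((M.T z).obj X) (𝟙 _) :=
  ⟨hid, fun _ f _ => ⟨f, Category.comp_id f, fun _ hφ => (Category.comp_id _).symm.trans hφ⟩⟩

theorem IsTerminalCentralCone.isIso {Z : C} {ι : Z ⟶ (M.T z).obj X}
    (hι : M.IsTerminalCentralCone z hz X Z ι)
    (hid : M.CentralCone z hz X ((M.T z).obj X) (𝟙 _)) : IsIso ι := by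
  obtain ⟨hcone, hterm⟩ := hι
  obtain ⟨φ, hφ, -⟩ := hterm _ (𝟙 _) hid
  have hιφ : ι ≫ φ = 𝟙 Z :=
    (hterm Z ι hcone).unique (by rw [Category.assoc, hφ, Category.comp_id]) (Category.id_comp ι)
  exact ⟨φ, hιφ, hφ⟩

end StrongGradedMonad

open StrongGradedMonad in
/-- Every commutative strong graded monad is centralisable: `(T^z X, id)` is a terminal graded
central cone at every `(z, X)` with `z` central, and consequently the centre of `M` is naturally
isomorphic to the restriction of `M` to the central gradations (the structure map of any terminal
graded central cone is an isomorphism). -/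
theorem commutative_centre_iso
    {G : Type*} [Monoid G] [PartialOrder G] [MulLeftMono G] [MulRightMono G]
    {C : Type u} [Category.{v} C] [MonoidalCategory C] [SymmetricCategory C]
    (M : StrongGradedMonad G C) (hcomm : M.IsCommutative) :
    (∀ (z : G) (hz : ∀ b : G, z * b = b * z) (X : C),
      M.IsTerminalCentralCone z hz X ((M.T z).obj X) (𝟙 ((M.T z).obj X))) ∧
    M.Centralisable ∧
    (∀ (z : G) (hz : ∀ b : G, z * b = b * z) (X Z : C) (ι : Z ⟶ (M.T z).obj X),
      M.IsTerminalCentralCone z hz X Z ι → IsIso ι) := by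
  have hid := M.centralCone_id_of_isCommutative hcomm
  have hterminal z hz X := isTerminalCentralCone_id (hid z hz X)
  exact ⟨hterminal, fun z hz X => ⟨_, _, hterminal z hz X⟩,
    fun z hz X _ _ hι => hι.isIso (hid z hz X)⟩
end

section
/- Let Σ be a type (alphabet). For all languages L1, L2, L3, L4 ⊆ List Σ, the following inclusion holds: (L1 ∥ L3) · (L2 ∥ L4) ⊆ (L1 · L2) ∥ (L3 · L4), where · denotes language concatenation and ∥ denotes the shuffle product of languages. -/
/-- The set of all interleavings (shuffles) of two words. -/
def wordShuffle {α : Type*} : List α → List α → Set (List α)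
  | [], w => {w}
  | w, [] => {w}
  | a :: u, b :: v =>
      (fun x => a :: x) '' wordShuffle u (b :: v) ∪ (fun x => b :: x) '' wordShuffle (a :: u) v
termination_by u v => u.length + v.length

/-- The shuffle product of two languages. -/
def langShuffle {α : Type*} (L L' : Set (List α)) : Set (List α) :=
  {x | ∃ w ∈ L, ∃ w' ∈ L', x ∈ wordShuffle w w'}

/-- The concatenation of two languages. -/
def langConcat {α : Type*} (L L' : Set (List α)) : Set (List α) :=
  {x | ∃ w ∈ L, ∃ w' ∈ L', x = w ++ w'}

/-! Induct on the concatenated word, reading each shuffle from its first letter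
(`wordShuffle.cons_mem_iff`): every letter of `x` comes from the front of `u` or `v`, hence from
the front of `u ++ u'` or `v ++ v'`; once `x` is used up, `y` interleaves what remains. -/

namespace wordShuffle

variable {α : Type*}

@[simp]
theorem nil_left (w : List α) : wordShuffle [] w = {w} := by
  cases w <;> simp [wordShuffle]

@[simp]
theorem nil_right (w : List α) : wordShuffle w [] = {w} := by
  cases w <;> simp [wordShuffle]

theorem cons_cons (a b : α) (u v : List α) :
    wordShuffle (a :: u) (b :: v) =
      (a :: ·) '' wordShuffle u (b :: v) ∪ (b :: ·) '' wordShuffle (a :: u) v := by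
  simp [wordShuffle]

theorem nil_mem_iff {u v : List α} : [] ∈ wordShuffle u v ↔ u = [] ∧ v = [] := by
  cases u <;> cases v <;> simp [cons_cons, eq_comm]

theorem cons_mem_iff {c : α} {x u v : List α} :
    c :: x ∈ wordShuffle u v ↔
      (∃ u', u = c :: u' ∧ x ∈ wordShuffle u' v) ∨ (∃ v', v = c :: v' ∧ x ∈ wordShuffle u v') := by
  cases u <;> cases v <;> simp [cons_cons, eq_comm, and_comm]

end wordShuffle

open wordShuffle in
theorem append_mem_wordShuffle_append {α : Type*} {u v u' v' x y : List α}
    (hx : x ∈ wordShuffle u v) (hy : y ∈ wordShuffle u' v') :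
    x ++ y ∈ wordShuffle (u ++ u') (v ++ v') := by
  induction x generalizing u v with
  | nil =>
    obtain ⟨rfl, rfl⟩ := nil_mem_iff.mp hx
    simpa using hy
  | cons c x ih =>
    rw [List.cons_append, cons_mem_iff]
    rcases cons_mem_iff.mp hx with ⟨u₀, rfl, hx₀⟩ | ⟨v₀, rfl, hx₀⟩
    · exact .inl ⟨u₀ ++ u', rfl, ih hx₀⟩
    · exact .inr ⟨v₀ ++ v', rfl, ih hx₀⟩

/-- The duoidal inequality for languages: concatenation of shuffles is contained in the
shuffle of concatenations. -/
theorem langConcat_langShuffle_subset {A : Type*} (L1 L2 L3 L4 : Set (List A)) :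
    langConcat (langShuffle L1 L3) (langShuffle L2 L4) ⊆
      langShuffle (langConcat L1 L2) (langConcat L3 L4) := by
  rintro _ ⟨x, ⟨u, hu, v, hv, hx⟩, y, ⟨u', hu', v', hv', hy⟩, rfl⟩
  exact ⟨u ++ u', ⟨u, hu, u', hu', rfl⟩, v ++ v', ⟨v, hv, v', hv', rfl⟩,
    append_mem_wordShuffle_append hx hy⟩
end

section
/- Let G be a pomonoid, C a symmetric monoidal category, and T a strong G-graded monad on C. For every object X of C, the pair (X, η_X : X → T^i X) is a graded central cone of T at (i, X), where i is the unit of G (which lies in Z(G)). -/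
/-!
Both sides of the centrality equation collapse to `τ^b_{X,Y}`. The key fact is the costrength
form of the unit axiom, `τ'^1 ∘ (η ⊗ id) = η`, obtained from `τ^1 ∘ (id ⊗ η) = η` by conjugating
with the symmetry. On the left it turns `η` into `η_{X ⊗ T^b Y}`, which the left unit law
absorbs into `μ^{1,b}`; on the right, naturality of `τ^b` first pushes `η ⊗ id` inside `T^b`,
where the same fact and the right unit law absorb it into `μ^{b,1}`.
-/

open CategoryTheory MonoidalCategory

universe v u

variable (G : Type*) [Monoid G] [PartialOrder G] [MulLeftMono G] [MulRightMono G]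
variable (C : Type u) [Category.{v} C]

variable [MonoidalCategory C]

variable {G C}

theorem GradedMonad.unit_comp_map_comp_μ
    {G : Type*} [Monoid G] [PartialOrder G] [MulLeftMono G] [MulRightMono G]
    {C : Type u} [Category.{v} C] (M : GradedMonad G C) {A : C} (b : G) {B : C}
    (f : A ⟶ (M.T b).obj B) :
    M.η.app A ≫ (M.T 1).map f ≫ (M.μ 1 b).app B = f ≫ eqToHom (by rw [one_mul]) := by
  have hη : f ≫ M.η.app ((M.T b).obj B) = M.η.app A ≫ (M.T 1).map f := M.η.naturality f
  rw [← Category.assoc, ← hη, Category.assoc, M.left_unit]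

namespace StrongGradedMonad

variable (M : StrongGradedMonad G C)

theorem unit_tensor_τ (b : G) (X Y : C) :
    (M.η.app X ⊗ₘ 𝟙 ((M.T b).obj Y)) ≫ M.τ b ((M.T 1).obj X) Y =
      M.τ b X Y ≫ (M.T b).map (M.η.app X ⊗ₘ 𝟙 Y) := by
  have hτ := M.τ_natural b (M.η.app X) (𝟙 Y)
  rwa [CategoryTheory.Functor.map_id] at hτ

theorem unit_tensor_costr [SymmetricCategory C] (X W : C) :
    (M.η.app X ⊗ₘ 𝟙 W) ≫ M.costr 1 X W = M.η.app (X ⊗ W) := by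
  have hη : (β_ W X).hom ≫ M.η.app (X ⊗ W) = M.η.app (W ⊗ X) ≫ (M.T 1).map (β_ W X).hom :=
    M.η.naturality (β_ W X).hom
  rw [costr, ← Category.assoc, BraidedCategory.braiding_naturality, Category.assoc,
    ← Category.assoc (𝟙 W ⊗ₘ M.η.app X), M.τ_η, ← hη, ← Category.assoc]
  simp only [Functor.id_obj, SymmetricCategory.symmetry, Category.id_comp]

end StrongGradedMonad

open StrongGradedMonad in
/-- For every object `X`, the pair `(X, η_X)` is a graded central cone of `M` at `(1, X)`,
where `1` is the unit of the grading pomonoid (which is central). -/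
theorem unit_centralCone
    {G : Type*} [Monoid G] [PartialOrder G] [MulLeftMono G] [MulRightMono G]
    {C : Type u} [Category.{v} C] [MonoidalCategory C] [SymmetricCategory C]
    (M : StrongGradedMonad G C) (X : C) :
    M.CentralCone 1 (fun b => by rw [one_mul, mul_one]) X X (M.η.app X) := by
  intro b Y
  rw [← Category.assoc, unit_tensor_costr, M.toGradedMonad.unit_comp_map_comp_μ]
  rw [← Category.assoc, unit_tensor_τ, Category.assoc, ← Category.assoc ((M.T b).map _),
    ← Functor.map_comp, unit_tensor_costr, ← Category.assoc ((M.T b).map _), M.right_unit,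
    eqToHom_trans]
end
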